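/- Let k be a field of characteristic p > 0 and let π : 𝔸¹ → 𝔸¹ be the Frobenius x ↦ x^p. Then the composition π^t ∘ π of the transpose correspondence with π, as finite correspondences on 𝔸¹, equals p times the identity correspondence. -/

import Mathlib

open MvPolynomial

/-! Eliminating the middle variable `y` from `(y − x^p, y − z^p)` leaves `(x^p − z^p)`, since
substituting `y ↦ x^p` retracts `k[x,y,z]` onto `k[x,z]`; in characteristic `p` the generator
is `(x − z)^p`. -/

theorem Ideal.comap_eq_of_leftInverse {A B F G : Type*} [Semiring A] [Semiring B]
    [FunLike F A B] [RingHomClass F A B] [FunLike G B A] [RingHomClass G B A]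
    {f : F} {g : G} (hgf : Function.LeftInverse g f) {I : Ideal B} {J : Ideal A}
    (hJ : J ≤ I.comap f) (hI : I ≤ J.comap g) :
    I.comap f = J := by
  refine le_antisymm (fun a ha => ?_) hJ
  simpa only [Ideal.mem_comap, hgf a] using hI ha

namespace MvPolynomial

variable {R : Type*} [CommRing R]

theorem aeval_rename_zero_two_X_one (P Q : MvPolynomial (Fin 2) R) :
    aeval ![X 0, P, X 1] (rename (![0, 2] : Fin 2 → Fin 3) Q) = Q := by
  have hcomp : (![X 0, P, X 1] ∘ (![0, 2] : Fin 2 → Fin 3)) = X := by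
    funext i; fin_cases i <;> rfl
  rw [aeval_rename, hcomp, aeval_X_left_apply]

theorem comap_rename_span_X_one_sub_pair (P Q : MvPolynomial (Fin 2) R) :
    Ideal.comap (rename (![0, 2] : Fin 2 → Fin 3))
      (Ideal.span {X 1 - rename ![0, 2] P, X 1 - rename ![0, 2] Q}) =
    Ideal.span {P - Q} := by
  refine Ideal.comap_eq_of_leftInverse (g := aeval ![X 0, P, X 1])
    (aeval_rename_zero_two_X_one P) ?_ ?_
  · rw [Ideal.span_le, Set.singleton_subset_iff, SetLike.mem_coe, Ideal.mem_comap]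
    have hdiff : rename (![0, 2] : Fin 2 → Fin 3) (P - Q) =
        (X 1 - rename ![0, 2] Q) - (X 1 - rename ![0, 2] P) := by
      rw [map_sub]; ring
    rw [hdiff]
    exact Ideal.sub_mem _ (Ideal.subset_span (by simp)) (Ideal.subset_span (by simp))
  · rw [Ideal.span_le, Set.insert_subset_iff, Set.singleton_subset_iff]
    simp only [SetLike.mem_coe, Ideal.mem_comap, map_sub, aeval_X, aeval_rename_zero_two_X_one]
    exact ⟨by simp, Ideal.subset_span rfl⟩

end MvPolynomial

/-- Let `k` be a field of characteristic `p > 0` and `π : 𝔸¹ → 𝔸¹` the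
Frobenius `x ↦ x^p`.  The composition `π^t ∘ π` of the transpose correspondence with `π`,
as finite correspondences on `𝔸¹`, equals `p` times the identity correspondence.

Formalization.  Write `k[x,y,z] = MvPolynomial (Fin 3) k` (with `x = X 0` the source
variable, `y = X 1` the middle variable, `z = X 2` the target variable) and
`k[x,z] = MvPolynomial (Fin 2) k`, included into `k[x,y,z]` by `rename ![0, 2]`.
The graph `Γ_π ⊂ 𝔸¹_x × 𝔸¹_y` is cut out by `y − x^p` and the transpose `π^t ⊂ 𝔸¹_y × 𝔸¹_z`
by `y − z^p`; the composed correspondence is the pushforward to `𝔸¹_x × 𝔸¹_z` of their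
scheme-theoretic intersection, i.e. the cycle cut out by the elimination ideal
`(y − x^p, y − z^p) ∩ k[x,z]`.  The assertion `π^t ∘ π = p·Δ` says that this elimination
ideal is `(x − z)^p`, the ideal of `p` times the diagonal as an effective divisor. -/
theorem stmt_9 (k : Type) [Field k] (p : ℕ) [Fact p.Prime] [CharP k p] :
    Ideal.comap
      (rename (![0, 2] : Fin 2 → Fin 3) :
        MvPolynomial (Fin 2) k →ₐ[k] MvPolynomial (Fin 3) k)
      (Ideal.span {X 1 - X 0 ^ p, X 1 - X 2 ^ p}) =
    Ideal.span {(X 0 : MvPolynomial (Fin 2) k) - X 1} ^ p := by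
  have hx : (X 0 : MvPolynomial (Fin 3) k) ^ p = rename ![0, 2] (X 0 ^ p) := by simp
  have hz : (X 2 : MvPolynomial (Fin 3) k) ^ p = rename ![0, 2] (X 1 ^ p) := by simp
  rw [hx, hz, comap_rename_span_X_one_sub_pair, Ideal.span_singleton_pow, sub_pow_char]
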